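/- Let N, τ, M be positive integers with N > 2τ + M. Let z_j = e^{2πij/N} and let the index set {0,...,N-1} be partitioned into M contiguous segments. Let F, G : ℤ/N → ℂ be vectors with |F(j)| = |G(j)| for all j, whose DFTs are supported on sets of τ+1 consecutive indices (possibly different circular shifts for F and G), such that the phases of F and of G are each constant on every segment, and |F(j)| ≠ 0 at the first and last index of every segment. Then there exists φ ∈ ℝ such that G(j) = e^{iφ} F(j) for all j. -/

import Mathlib

set_option linter.unusedSectionVars false
set_option maxHeartbeats 1000000

open Finset

/-- The discrete Fourier transform `f(k) = (1/N) ∑_j F(j) e^{2πijk/N}`. -/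
noncomputable def dft {N : ℕ} [NeZero N] (F : ZMod N → ℂ) (k : ZMod N) : ℂ :=
  (N : ℂ)⁻¹ * ∑ j : ZMod N,
    F j * Complex.exp (2 * Real.pi * Complex.I * (j.val : ℂ) * (k.val : ℂ) / N)

/-- Membership in a compact support set `{-α, ..., -α+τ} mod N`. -/
def inShiftSupp (N τ : ℕ) (α : ℤ) (k : ZMod N) : Prop :=
  ∃ m : ℤ, -α ≤ m ∧ m ≤ -α + τ ∧ (m : ZMod N) = k

namespace PCPU

open Complex ComplexConjugate

noncomputable def om (N : ℕ) : ℂ := Complex.exp (2 * Real.pi * Complex.I / N)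

variable {N : ℕ} [NeZero N]

lemma hprim (N : ℕ) [NeZero N] : IsPrimitiveRoot (om N) N :=
  Complex.isPrimitiveRoot_exp N (NeZero.ne N)

lemma Wne : om N ≠ 0 := Complex.exp_ne_zero _

lemma WpowN : om N ^ (N : ℕ) = 1 := (hprim N).pow_eq_one

lemma Wzpow_one {d : ℤ} (h : (N : ℤ) ∣ d) : om N ^ d = 1 := by
  obtain ⟨c, rfl⟩ := h
  rw [zpow_mul, zpow_natCast, WpowN, one_zpow]

lemma Wcongr {x y : ℤ} (h : (N : ℤ) ∣ (x - y)) : om N ^ x = om N ^ y := by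
  have hx : om N ^ x = om N ^ (x - y) * om N ^ y := by
    rw [← zpow_add₀ Wne]; ring_nf
  rw [hx, Wzpow_one h, one_mul]

lemma Wmul (x y : ℤ) : om N ^ x * om N ^ y = om N ^ (x + y) := (zpow_add₀ Wne x y).symm

lemma Wconj (m : ℤ) : conj (om N ^ m) = om N ^ (-m) := by
  have hb : conj (om N) = (om N)⁻¹ := by
    unfold om
    rw [← Complex.exp_conj, ← Complex.exp_neg]
    simp [map_div₀, map_mul, Complex.conj_I, map_ofNat]
    ring_nf
  rw [map_zpow₀, hb, inv_zpow, zpow_neg]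

lemma sum_zmod (f : ℕ → ℂ) : ∑ k : ZMod N, f k.val = ∑ i ∈ Finset.range N, f i := by
  apply Finset.sum_nbij' (i := fun (k : ZMod N) => k.val) (j := fun (i : ℕ) => (i : ZMod N))
  · intro k _; exact Finset.mem_range.mpr (ZMod.val_lt k)
  · intro i _; exact Finset.mem_univ _
  · intro k _; exact ZMod.natCast_rightInverse k
  · intro i hi; exact ZMod.val_cast_of_lt (Finset.mem_range.mp hi)
  · intro k _; rfl

lemma Ncast_ne : (N : ℂ) ≠ 0 := Nat.cast_ne_zero.mpr (NeZero.ne N)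

lemma Wsum (d : ℤ) : ∑ k : ZMod N, om N ^ (d * (k.val : ℤ)) = if (N : ℤ) ∣ d then (N : ℂ) else 0 := by
  have h1 : ∀ k : ZMod N, om N ^ (d * (k.val : ℤ)) = (om N ^ d) ^ (k.val : ℕ) := fun k => by
    rw [zpow_mul, zpow_natCast]
  rw [Finset.sum_congr rfl (fun k _ => h1 k), sum_zmod (fun i => (om N ^ d) ^ i)]
  split_ifs with h
  · rw [Wzpow_one h]
    simp
  · have hz1 : om N ^ d ≠ 1 := fun hc => h (((hprim N).zpow_eq_one_iff_dvd d).mp hc)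
    have hzN : (om N ^ d) ^ N = 1 := by
      rw [← zpow_natCast, ← zpow_mul, mul_comm, zpow_mul, zpow_natCast, WpowN, one_zpow]
    have hg := geom_sum_mul (om N ^ d) N
    rw [hzN, sub_self] at hg
    rcases mul_eq_zero.mp hg with h' | h'
    · exact h'
    · exact absurd (sub_eq_zero.mp h') hz1

lemma dft_eq (F : ZMod N → ℂ) (k : ZMod N) :
    dft F k = (N : ℂ)⁻¹ * ∑ j : ZMod N, F j * om N ^ ((j.val : ℤ) * (k.val : ℤ)) := by
  unfold dft
  congr 1
  apply Finset.sum_congr rfl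
  intro j _
  congr 1
  rw [show ((j.val : ℤ) * (k.val : ℤ)) = ((j.val * k.val : ℕ) : ℤ) by push_cast; ring,
    zpow_natCast]
  unfold om
  rw [← Complex.exp_nat_mul]
  congr 1
  push_cast
  ring

lemma dvd_sub_val_iff (j' j : ZMod N) : (N : ℤ) ∣ ((j'.val : ℤ) - (j.val : ℤ)) ↔ j' = j := by
  constructor
  · intro h
    have h0 : (((j'.val : ℤ) - (j.val : ℤ) : ℤ) : ZMod N) = 0 :=
      (ZMod.intCast_zmod_eq_zero_iff_dvd _ N).mpr h
    push_cast at h0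
    rw [ZMod.natCast_rightInverse j', ZMod.natCast_rightInverse j] at h0
    exact sub_eq_zero.mp h0
  · rintro rfl
    simp

lemma inversion (F : ZMod N → ℂ) (j : ZMod N) :
    F j = ∑ k : ZMod N, dft F k * om N ^ (-((j.val : ℤ) * (k.val : ℤ))) := by
  have step1 : ∀ k : ZMod N, dft F k * om N ^ (-((j.val : ℤ) * (k.val : ℤ)))
      = (N : ℂ)⁻¹ * ∑ j' : ZMod N, F j' * om N ^ (((j'.val : ℤ) - (j.val : ℤ)) * (k.val : ℤ)) := by
    intro k
    rw [dft_eq, mul_assoc, Finset.sum_mul]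
    congr 1
    apply Finset.sum_congr rfl
    intro j' _
    rw [mul_assoc, Wmul]
    congr 1
    ring
  rw [Finset.sum_congr rfl (fun k _ => step1 k), ← Finset.mul_sum, Finset.sum_comm]
  have step2 : ∀ j' : ZMod N,
      ∑ k : ZMod N, F j' * om N ^ (((j'.val : ℤ) - (j.val : ℤ)) * (k.val : ℤ))
        = F j' * (if (N : ℤ) ∣ ((j'.val : ℤ) - (j.val : ℤ)) then (N : ℂ) else 0) := by
    intro j'
    rw [← Finset.mul_sum, Wsum]
  rw [Finset.sum_congr rfl (fun j' _ => step2 j')]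
  rw [Finset.sum_eq_single_of_mem j (Finset.mem_univ j)]
  · rw [if_pos ((dvd_sub_val_iff j j).mpr rfl)]
    field_simp
    rw [mul_div_assoc, div_self Ncast_ne, mul_one]
  · intro j' _ hne
    rw [if_neg (fun h => hne ((dvd_sub_val_iff j' j).mp h)), mul_zero]

lemma rep {τ : ℕ} (hτ : τ + 1 ≤ N) (F : ZMod N → ℂ) (α : ℤ)
    (hsupp : ∀ k : ZMod N, ¬ inShiftSupp N τ α k → dft F k = 0) :
    ∃ f : ℕ → ℂ, ∀ j : ℕ,
      F (j : ZMod N) = ∑ t ∈ Finset.range (τ + 1), f t * om N ^ ((j : ℤ) * (α - t)) := by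
  refine ⟨fun t => dft F (((-α + t : ℤ) : ZMod N)), fun j => ?_⟩
  set J : ZMod N := (j : ZMod N) with hJ
  rw [inversion F J]
  set S : Finset (ZMod N) := (Finset.range (τ + 1)).image (fun t : ℕ => ((-α + t : ℤ) : ZMod N))
    with hS
  rw [← Finset.sum_subset (Finset.subset_univ S)]
  · rw [hS, Finset.sum_image]
    · apply Finset.sum_congr rfl
      intro t ht
      congr 1
      set v : ℕ := (((-α + t : ℤ) : ZMod N)).val with hv
      have h2 : (N : ℤ) ∣ ((v : ℤ) - (-α + t)) := by
        rw [← ZMod.intCast_zmod_eq_zero_iff_dvd]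
        push_cast
        rw [ZMod.natCast_rightInverse]
        push_cast
        ring
      have h1 : (N : ℤ) ∣ ((J.val : ℤ) - (j : ℤ)) := by
        rw [← ZMod.intCast_zmod_eq_zero_iff_dvd]
        push_cast
        rw [ZMod.natCast_rightInverse, hJ]
        ring
      apply Wcongr
      have heq : -((J.val : ℤ) * v) - (j : ℤ) * (α - t)
          = -(((J.val : ℤ) - (j : ℤ)) * v + (j : ℤ) * ((v : ℤ) - (-α + t))) := by ring
      rw [heq]
      exact dvd_neg.mpr (dvd_add (h1.mul_right _) (h2.mul_left _))
    · intro t ht t' ht' hee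
      have h1 : ((t : ℤ) : ZMod N) = ((t' : ℤ) : ZMod N) := by
        have := congrArg (fun z => z + (α : ZMod N)) hee
        push_cast at this ⊢
        linear_combination this
      push_cast at h1
      have := congrArg ZMod.val h1
      rwa [ZMod.val_cast_of_lt (lt_of_lt_of_le (Finset.mem_range.mp ht) hτ),
        ZMod.val_cast_of_lt (lt_of_lt_of_le (Finset.mem_range.mp ht') hτ)] at this
  · intro k _ hk
    rw [hsupp k, zero_mul]
    rintro ⟨m, hm1, hm2, hm3⟩
    apply hk
    rw [hS]
    apply Finset.mem_image.mpr
    refine ⟨(m + α).toNat, ?_, ?_⟩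
    · rw [Finset.mem_range]
      have : (m + α).toNat ≤ τ := Int.toNat_le.mpr (by omega)
      omega
    · rw [Int.toNat_of_nonneg (by omega)]
      rw [show -α + (m + α) = m by ring]
      exact hm3

lemma poly_vanish {τ : ℕ} (D : ℕ → ℕ → ℂ) (roots : Finset ℕ)
    (hroots : ∀ j ∈ roots, j < N) (hcard : 2 * τ < roots.card)
    (hvan : ∀ j ∈ roots, ∑ t ∈ Finset.range (τ + 1), ∑ s ∈ Finset.range (τ + 1),
      D t s * om N ^ ((j : ℤ) * ((s : ℤ) - (t : ℤ))) = 0) :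
    ∀ j : ℕ, ∑ t ∈ Finset.range (τ + 1), ∑ s ∈ Finset.range (τ + 1),
      D t s * om N ^ ((j : ℤ) * ((s : ℤ) - (t : ℤ))) = 0 := by
  classical
  set P : Polynomial ℂ := ∑ t ∈ Finset.range (τ + 1), ∑ s ∈ Finset.range (τ + 1),
    Polynomial.C (D t s) * Polynomial.X ^ (s + τ - t) with hP
  have hdeg : P.natDegree ≤ 2 * τ := by
    apply Polynomial.natDegree_sum_le_of_forall_le
    intro t ht
    apply Polynomial.natDegree_sum_le_of_forall_le
    intro s hs
    refine (Polynomial.natDegree_C_mul_X_pow_le _ _).trans ?_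
    have := Finset.mem_range.mp hs
    omega
  have heval : ∀ j : ℕ, P.eval (om N ^ j)
      = om N ^ ((j : ℤ) * (τ : ℤ)) * ∑ t ∈ Finset.range (τ + 1), ∑ s ∈ Finset.range (τ + 1),
        D t s * om N ^ ((j : ℤ) * ((s : ℤ) - (t : ℤ))) := by
    intro j
    rw [hP, Polynomial.eval_finset_sum, Finset.mul_sum]
    apply Finset.sum_congr rfl
    intro t ht
    rw [Polynomial.eval_finset_sum, Finset.mul_sum]
    apply Finset.sum_congr rfl
    intro s hs
    have ht' : t ≤ τ := by have := Finset.mem_range.mp ht; omega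
    rw [Polynomial.eval_mul, Polynomial.eval_pow, Polynomial.eval_C, Polynomial.eval_X]
    rw [← mul_assoc, mul_comm (om N ^ ((j : ℤ) * (τ : ℤ))) (D t s), mul_assoc, Wmul]
    congr 1
    rw [← pow_mul, ← zpow_natCast (om N) (j * (s + τ - t))]
    apply Wcongr
    have : ((j * (s + τ - t) : ℕ) : ℤ) = (j : ℤ) * ((s : ℤ) + τ - t) := by
      push_cast [Nat.cast_sub (show t ≤ s + τ by omega)]
      ring
    rw [this]
    exact ⟨0, by ring⟩
  have hP0 : P = 0 := by
    apply Polynomial.eq_zero_of_natDegree_lt_card_of_eval_eq_zero' P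
      (roots.image (fun j => om N ^ j))
    · intro x hx
      obtain ⟨j, hj, rfl⟩ := Finset.mem_image.mp hx
      rw [heval j, hvan j hj, mul_zero]
    · rw [Finset.card_image_of_injOn]
      · omega
      · intro x hx y hy hxy
        exact (hprim N).pow_inj (hroots x hx) (hroots y hy) hxy
  intro j
  have := heval j
  rw [hP0, Polynomial.eval_zero] at this
  rcases mul_eq_zero.mp this.symm with h | h
  · exact absurd h (zpow_ne_zero _ Wne)
  · exact h

lemma prod_rep {τ : ℕ} (f : ℕ → ℂ) (α : ℤ) (F : ZMod N → ℂ)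
    (hF : ∀ j : ℕ, F (j : ZMod N) = ∑ t ∈ Finset.range (τ + 1), f t * om N ^ ((j : ℤ) * (α - t)))
    (j : ℕ) :
    F ((j + 1 : ℕ) : ZMod N) * conj (F (j : ZMod N))
      = ∑ t ∈ Finset.range (τ + 1), ∑ s ∈ Finset.range (τ + 1),
          (f t * conj (f s) * om N ^ (α - t)) * om N ^ ((j : ℤ) * ((s : ℤ) - (t : ℤ))) := by
  rw [hF (j + 1), hF j, map_sum, Finset.sum_mul_sum]
  apply Finset.sum_congr rfl
  intro t ht
  apply Finset.sum_congr rfl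
  intro s hs
  rw [map_mul, Wconj]
  calc f t * om N ^ (((j + 1 : ℕ) : ℤ) * (α - t)) * (conj (f s) * om N ^ (-((j : ℤ) * (α - s))))
      = f t * conj (f s) * (om N ^ (((j + 1 : ℕ) : ℤ) * (α - t)) * om N ^ (-((j : ℤ) * (α - s)))) := by
        ring
    _ = f t * conj (f s) * om N ^ ((((j + 1 : ℕ) : ℤ) * (α - t)) + (-((j : ℤ) * (α - s)))) := by
        rw [Wmul]
    _ = f t * conj (f s) * om N ^ ((α - t) + (j : ℤ) * ((s : ℤ) - (t : ℤ))) := by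
        congr 1
        push_cast
        ring
    _ = (f t * conj (f s) * om N ^ (α - t)) * om N ^ ((j : ℤ) * ((s : ℤ) - (t : ℤ))) := by
        rw [← Wmul]
        ring

end PCPU

open PCPU Complex ComplexConjugate in
theorem piecewise_constant_phase_uniqueness (N τ M : ℕ) [NeZero N]
    (hM : 0 < M) (hN : 2 * τ + M < N)
    -- the segment endpoints: segment m is {e m, ..., e (m+1) - 1}
    (e : ℕ → ℕ) (he0 : e 0 = 0) (heM : e M = N)
    (hmono : ∀ m < M, e m < e (m + 1))
    (F G : ZMod N → ℂ)
    (hmag : ∀ j : ZMod N, ‖G j‖ = ‖F j‖)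
    -- compact supports of length τ+1 (possibly different shifts α, β)
    (α β : ℤ)
    (hFsupp : ∀ k : ZMod N, ¬ inShiftSupp N τ α k → dft F k = 0)
    (hGsupp : ∀ k : ZMod N, ¬ inShiftSupp N τ β k → dft G k = 0)
    -- phases of F and G are constant on every segment
    (a b : ℕ → ℂ)
    (ha : ∀ m < M, ‖a m‖ = 1)
    (hb : ∀ m < M, ‖b m‖ = 1)
    (hFa : ∀ m < M, ∀ j : ℕ, e m ≤ j → j < e (m + 1) →
      F (j : ZMod N) = (‖F (j : ZMod N)‖ : ℂ) * a m)
    (hGb : ∀ m < M, ∀ j : ℕ, e m ≤ j → j < e (m + 1) →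
      G (j : ZMod N) = (‖G (j : ZMod N)‖ : ℂ) * b m)
    -- F does not vanish at the first and last index of each segment
    (hnz : ∀ m < M, F ((e m : ℕ) : ZMod N) ≠ 0 ∧ F ((e (m + 1) - 1 : ℕ) : ZMod N) ≠ 0) :
    ∃ φ : ℝ, ∀ j : ZMod N, G j = Complex.exp (Complex.I * φ) * F j := by
  classical
  obtain ⟨f, hf⟩ := rep (by omega) F α hFsupp
  obtain ⟨g, hg⟩ := rep (by omega) G β hGsupp
  set c : ℕ → ℂ := fun m => b m * conj (a m) with hc
  have hca : ∀ m < M, conj (a m) * a m = 1 := fun m hm => by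
    rw [mul_comm, Complex.mul_conj, Complex.normSq_eq_norm_sq, ha m hm]
    norm_num
  have hcc : ∀ m < M, conj (c m) * c m = 1 := fun m hm => by
    have habs : ‖c m‖ = 1 := by
      rw [hc]
      simp only [norm_mul, Complex.norm_conj]
      rw [ha m hm, hb m hm, one_mul]
    rw [mul_comm, Complex.mul_conj, Complex.normSq_eq_norm_sq, habs]
    norm_num
  have hseg : ∀ m < M, ∀ j : ℕ, e m ≤ j → j < e (m + 1) →
      G (j : ZMod N) = c m * F (j : ZMod N) := by
    intro m hm j h1 h2
    have hFj := hFa m hm j h1 h2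
    have h3 : c m * F (j : ZMod N) = (‖F (j : ZMod N)‖ : ℂ) * b m := by
      have hcm : c m = b m * conj (a m) := rfl
      rw [hcm]
      conv_lhs => rw [hFj]
      calc b m * conj (a m) * ((‖F (j : ZMod N)‖ : ℂ) * a m)
          = (‖F (j : ZMod N)‖ : ℂ) * b m * (conj (a m) * a m) := by ring
        _ = (‖F (j : ZMod N)‖ : ℂ) * b m := by rw [hca m hm, mul_one]
    rw [hGb m hm j h1 h2, hmag, h3]
  have hpart : ∀ n, n ≤ M → ∀ j, j < e n → ∃ m, m < n ∧ e m ≤ j ∧ j < e (m + 1) := by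
    intro n
    induction n with
    | zero => intro _ j hj; rw [he0] at hj; omega
    | succ n ih =>
      intro hn j hj
      by_cases h : j < e n
      · obtain ⟨m, hm, h1, h2⟩ := ih (by omega) j h
        exact ⟨m, by omega, h1, h2⟩
      · exact ⟨n, by omega, by omega, hj⟩
  set D : ℕ → ℕ → ℂ := fun t s =>
    g t * conj (g s) * om N ^ (β - t) - f t * conj (f s) * om N ^ (α - t) with hD
  have hdiff : ∀ j : ℕ,
      G ((j + 1 : ℕ) : ZMod N) * conj (G (j : ZMod N))
        - F ((j + 1 : ℕ) : ZMod N) * conj (F (j : ZMod N))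
      = ∑ t ∈ Finset.range (τ + 1), ∑ s ∈ Finset.range (τ + 1),
          D t s * om N ^ ((j : ℤ) * ((s : ℤ) - (t : ℤ))) := by
    intro j
    rw [prod_rep g β G hg j, prod_rep f α F hf j, ← Finset.sum_sub_distrib]
    apply Finset.sum_congr rfl
    intro t _
    rw [← Finset.sum_sub_distrib]
    apply Finset.sum_congr rfl
    intro s _
    rw [← sub_mul, hD]
  set Bd : Finset ℕ := (Finset.range M).image (fun m => e (m + 1) - 1) with hBd
  set R : Finset ℕ := (Finset.range N) \ Bd with hR
  have hcardR : 2 * τ < R.card := by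
    have h1 : Bd.card ≤ M := Finset.card_image_le.trans (by simp)
    have h2 : (Finset.range N).card - Bd.card ≤ R.card := Finset.le_card_sdiff Bd (Finset.range N)
    rw [Finset.card_range] at h2
    omega
  have hvan : ∀ j ∈ R, ∑ t ∈ Finset.range (τ + 1), ∑ s ∈ Finset.range (τ + 1),
      D t s * om N ^ ((j : ℤ) * ((s : ℤ) - (t : ℤ))) = 0 := by
    intro j hjR
    obtain ⟨hjN, hjB⟩ := Finset.mem_sdiff.mp hjR
    obtain ⟨m, hm, h1, h2⟩ := hpart M le_rfl j (by rw [heM]; exact Finset.mem_range.mp hjN)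
    have hne : j ≠ e (m + 1) - 1 := fun hcon =>
      hjB (Finset.mem_image.mpr ⟨m, Finset.mem_range.mpr hm, hcon.symm⟩)
    have h3 : j + 1 < e (m + 1) := by omega
    have heq : G ((j + 1 : ℕ) : ZMod N) * conj (G (j : ZMod N))
        = F ((j + 1 : ℕ) : ZMod N) * conj (F (j : ZMod N)) := by
      rw [hseg m hm j h1 h2, hseg m hm (j + 1) (by omega) h3, map_mul]
      calc c m * F ((j + 1 : ℕ) : ZMod N) * (conj (c m) * conj (F (j : ZMod N)))
          = (conj (c m) * c m) * (F ((j + 1 : ℕ) : ZMod N) * conj (F (j : ZMod N))) := by ring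
        _ = F ((j + 1 : ℕ) : ZMod N) * conj (F (j : ZMod N)) := by rw [hcc m hm, one_mul]
    rw [← hdiff j, heq, sub_self]
  have hall := poly_vanish D R
    (fun j hj => Finset.mem_range.mp (Finset.mem_sdiff.mp hj).1) hcardR hvan
  have key : ∀ j : ℕ, G ((j + 1 : ℕ) : ZMod N) * conj (G (j : ZMod N))
      = F ((j + 1 : ℕ) : ZMod N) * conj (F (j : ZMod N)) := by
    intro j
    have h := hdiff j
    rw [hall j] at h
    exact sub_eq_zero.mp h
  have hstep : ∀ m, m + 1 < M → c (m + 1) = c m := by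
    intro m hm1
    have hm : m < M := by omega
    have hlt := hmono m hm
    have hj01 : (e (m + 1) - 1) + 1 = e (m + 1) := by omega
    have hkey := key (e (m + 1) - 1)
    rw [hj01] at hkey
    have hG0 : G ((e (m + 1) - 1 : ℕ) : ZMod N) = c m * F ((e (m + 1) - 1 : ℕ) : ZMod N) :=
      hseg m hm (e (m + 1) - 1) (by omega) (by omega)
    have hG1 : G ((e (m + 1) : ℕ) : ZMod N) = c (m + 1) * F ((e (m + 1) : ℕ) : ZMod N) :=
      hseg (m + 1) hm1 (e (m + 1)) le_rfl (hmono (m + 1) hm1)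
    rw [hG0, hG1, map_mul] at hkey
    have hF1 : F ((e (m + 1) : ℕ) : ZMod N) ≠ 0 := (hnz (m + 1) hm1).1
    have hF0 : conj (F ((e (m + 1) - 1 : ℕ) : ZMod N)) ≠ 0 := by
      simpa using (hnz m hm).2
    have h4 : (c (m + 1) * conj (c m))
          * (F ((e (m + 1) : ℕ) : ZMod N) * conj (F ((e (m + 1) - 1 : ℕ) : ZMod N)))
        = 1 * (F ((e (m + 1) : ℕ) : ZMod N) * conj (F ((e (m + 1) - 1 : ℕ) : ZMod N))) := by
      rw [one_mul]
      linear_combination hkey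
    have h5 : c (m + 1) * conj (c m) = 1 := mul_right_cancel₀ (mul_ne_zero hF1 hF0) h4
    calc c (m + 1) = c (m + 1) * (conj (c m) * c m) := by rw [hcc m hm, mul_one]
      _ = (c (m + 1) * conj (c m)) * c m := by ring
      _ = c m := by rw [h5, one_mul]
  have hc0 : ∀ m, m < M → c m = c 0 := by
    intro m
    induction m with
    | zero => intro _; rfl
    | succ n ih => intro h; rw [hstep n h]; exact ih (by omega)
  refine ⟨Complex.arg (c 0), ?_⟩
  have habs0 : ‖c 0‖ = 1 := by
    rw [hc]
    simp only [norm_mul, Complex.norm_conj]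
    rw [ha 0 hM, hb 0 hM, one_mul]
  have hexp : Complex.exp (Complex.I * (Complex.arg (c 0) : ℂ)) = c 0 := by
    rw [mul_comm]
    have h := Complex.norm_mul_exp_arg_mul_I (c 0)
    rwa [habs0, Complex.ofReal_one, one_mul] at h
  intro j
  obtain ⟨m, hm, h1, h2⟩ := hpart M le_rfl j.val (by rw [heM]; exact ZMod.val_lt j)
  have h := hseg m hm j.val h1 h2
  rw [ZMod.natCast_rightInverse j] at h
  rw [h, hc0 m hm, hexp]
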